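/- Let G be a simple connected graph on n ≥ 2 vertices with minimum degree δ and maximum degree Δ, having at least one pair of distinct nonadjacent vertices, and let λ and μ be real numbers such that every pair of adjacent vertices of G has at least λ common neighbors and every pair of distinct nonadjacent vertices of G has at least μ common neighbors. Then the second-smallest Laplacian eigenvalue satisfies ℓ_{n−1}(G) ≥ ( 2δ − λ + μ − sqrt( (2δ − λ + μ)² − 4μn − 4δ² + 4Δ² ) ) / 2. -/

import Mathlib

/-!
Let `L` be the Laplacian, `B = 2δ - λ + μ` and `N = L² - B L + μ (n I - J)`. For `i ≠ j`,
`N i j = c(i, j) - (d i + d j - B) [i ~ j] - μ`, where `c(i, j)` counts common neighbours, so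
the hypotheses on `λ` and `μ` give `N i j ≥ -2(Δ - δ) [i ~ j] = 2(Δ - δ) L i j` off the diagonal.
Both matrices are symmetric with zero row sums, and for such a matrix `M` the quadratic form is
`-½ ∑ i j, M i j (x i - x j)²`, so `xᵀ N x ≤ 2(Δ - δ) xᵀ L x`. On an eigenvector `X ⊥ 1` of `L`
with eigenvalue `ℓ` this reads `ℓ² - B ℓ + μ n ≤ 2(Δ - δ) ℓ`. Since `L` preserves `1ᗮ`, the
Rayleigh quotient of the test vector `e_v - e_u`, with `v` of minimum degree and `u` a
non-neighbour of `v`, bounds `ℓ`: `2ℓ ≤ δ + Δ`. Hence `ℓ² - B ℓ + μ n + δ² - Δ² ≤ 0`, and the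
bound is the smaller root of this quadratic.
-/

open Finset Matrix
open scoped InnerProductSpace RealInnerProductSpace

theorem LinearMap.IsSymmetric.mul_inner_self_le_inner_map_self {E : Type*}
    [NormedAddCommGroup E] [InnerProductSpace ℝ E] [FiniteDimensional ℝ E] {T : E →ₗ[ℝ] E}
    (hT : T.IsSymmetric) {ℓ : ℝ} (hℓ : ∀ μ, Module.End.HasEigenvalue T μ → ℓ ≤ μ) (x : E) :
    ℓ * ⟪x, x⟫ ≤ ⟪T x, x⟫ := by
  set b := hT.eigenvectorBasis rfl
  rw [← b.repr.inner_map_map, ← b.repr.inner_map_map, PiLp.inner_apply, PiLp.inner_apply,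
    mul_sum]
  refine sum_le_sum fun i _ ↦ ?_
  rw [hT.eigenvectorBasis_apply_self_apply rfl x i]
  simp only [RCLike.inner_apply, conj_trivial]
  have := hℓ _ (hT.hasEigenvalue_eigenvalues rfl i)
  nlinarith [mul_self_nonneg (b.repr x i)]

namespace Matrix

variable {ι R : Type*} [Fintype ι]

theorem IsHermitian.mul_dotProduct_self_le_of_sum_eq_zero [DecidableEq ι]
    {A : Matrix ι ι ℝ} (hA : A.IsHermitian) (hA1 : A *ᵥ (fun _ ↦ 1) = 0) {ℓ : ℝ}
    (hℓ : ℓ ∈ lowerBounds {l | ∃ X : ι → ℝ, X ≠ 0 ∧ ∑ i, X i = 0 ∧ A *ᵥ X = l • X})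
    {Y : ι → ℝ} (hY : ∑ i, Y i = 0) : ℓ * (Y ⬝ᵥ Y) ≤ Y ⬝ᵥ A *ᵥ Y := by
  let W := (ℝ ∙ (WithLp.toLp 2 (fun _ ↦ 1) : EuclideanSpace ℝ ι))ᗮ
  have hmem (x : EuclideanSpace ℝ ι) : x ∈ W ↔ ∑ i, x i = 0 := by
    simp [W, Submodule.mem_orthogonal_singleton_iff_inner_right, PiLp.inner_apply]
  have hT : A.toEuclideanLin.IsSymmetric := isSymmetric_toEuclideanLin_iff.2 hA
  have hW : ∀ x ∈ W, A.toEuclideanLin x ∈ W := fun x hx ↦ by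
    rw [Submodule.mem_orthogonal_singleton_iff_inner_right] at hx ⊢
    rw [← hT, show A.toEuclideanLin (WithLp.toLp 2 fun _ ↦ 1) = 0 by
      simpa using congrArg (WithLp.toLp 2) hA1, inner_zero_left]
  refine (hT.restrict_invariant hW).mul_inner_self_le_inner_map_self (fun μ hμ ↦ ?_)
    ⟨WithLp.toLp 2 Y, (hmem _).2 hY⟩
  obtain ⟨w, hw⟩ := hμ.exists_hasEigenvector
  refine hℓ ⟨(w : EuclideanSpace ℝ ι).ofLp, by simpa using hw.2, (hmem _).1 w.2, ?_⟩
  exact congrArg (fun v : W ↦ (v : EuclideanSpace ℝ ι).ofLp)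
    (Module.End.mem_eigenspace_iff.1 hw.1)

variable [CommRing R]

theorem IsSymm.two_mul_dotProduct_mulVec_self {P : Matrix ι ι R} (hP : P.IsSymm)
    (hP1 : P *ᵥ (fun _ ↦ 1) = 0) (x : ι → R) :
    2 * (x ⬝ᵥ P *ᵥ x) = -∑ i, ∑ j, P i j * (x i - x j) ^ 2 := by
  have hrow : ∀ i, ∑ j, P i j = 0 := fun i ↦ by
    simpa [mulVec, dotProduct] using congrFun hP1 i
  have expand : ∀ i j, P i j * (x i - x j) ^ 2
      = P i j * x i ^ 2 + P j i * x j ^ 2 - 2 * (x i * (P i j * x j)) := fun i j ↦ by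
    rw [hP.apply i j]
    ring
  simp only [expand, sum_add_distrib, sum_sub_distrib, ← mul_sum, ← sum_mul]
  rw [sum_comm (f := fun i j ↦ P j i * x j ^ 2)]
  simp only [← sum_mul, hrow, zero_mul, sum_const_zero, mulVec, dotProduct]
  ring

theorem IsSymm.dotProduct_mulVec_self_nonneg [LinearOrder R] [IsStrictOrderedRing R]
    {P : Matrix ι ι R} (hP : P.IsSymm) (hP1 : P *ᵥ (fun _ ↦ 1) = 0)
    (hoff : ∀ i j, i ≠ j → P i j ≤ 0) (x : ι → R) : 0 ≤ x ⬝ᵥ P *ᵥ x := by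
  have key : 0 ≤ -∑ i, ∑ j, P i j * (x i - x j) ^ 2 := by
    refine neg_nonneg.2 (sum_nonpos fun i _ ↦ sum_nonpos fun j _ ↦ ?_)
    rcases eq_or_ne i j with rfl | hij
    · simp
    · exact mul_nonpos_of_nonpos_of_nonneg (hoff i j hij) (sq_nonneg _)
  rw [← hP.two_mul_dotProduct_mulVec_self hP1] at key
  linarith

end Matrix

namespace SimpleGraph

variable {V : Type*} [Fintype V] [DecidableEq V]

theorem lapMatrix_top_mulVec_of_sum_eq_zero {R : Type*} [CommRing R] {x : V → R}
    (hx : ∑ i, x i = 0) : (⊤ : SimpleGraph V).lapMatrix R *ᵥ x = (Fintype.card V : R) • x := by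
  ext i
  have hcard : 1 ≤ Fintype.card V := Fintype.card_pos_iff.2 ⟨i⟩
  have hsum : ∑ j ∈ {i}ᶜ, x j = -x i := by
    rw [eq_neg_iff_add_eq_zero, ← hx, ← sum_compl_add_sum {i}, sum_singleton]
  rw [lapMatrix_mulVec_apply, neighborFinset_top, hsum, degree, neighborFinset_top, card_compl,
    card_singleton, Nat.cast_sub hcard]
  simp only [Nat.cast_one, Pi.smul_apply, smul_eq_mul]
  ring

variable (G : SimpleGraph V) [DecidableRel G.Adj]

theorem lapMatrix_apply_of_ne {R : Type*} [AddGroupWithOne R] {i j : V} (h : i ≠ j) :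
    G.lapMatrix R i j = -G.adjMatrix R i j := by
  simp [lapMatrix, degMatrix, h]

theorem adjMatrix_mul_self_apply (R : Type*) [NonAssocSemiring R] (i j : V) :
    (G.adjMatrix R * G.adjMatrix R) i j = #(G.neighborFinset i ∩ G.neighborFinset j) := by
  rw [adjMatrix_mul_apply]
  simp only [adjMatrix_apply, sum_boole]
  congr 2
  ext k
  simp [G.adj_comm k j]

theorem lapMatrix_mul_self_apply_of_ne (R : Type*) [CommRing R] {i j : V} (h : i ≠ j) :
    (G.lapMatrix R * G.lapMatrix R) i j = #(G.neighborFinset i ∩ G.neighborFinset j)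
      - (G.degree i + G.degree j) * G.adjMatrix R i j := by
  simp only [lapMatrix, degMatrix, sub_mul, mul_sub, diagonal_mul_diagonal, diagonal_mul,
    mul_diagonal, Matrix.sub_apply, diagonal_apply_ne _ h, adjMatrix_mul_self_apply]
  ring

/-- For a strongly regular graph with parameters `(n, k, λ, μ)` this matrix vanishes at
`B = 2k - λ + μ`. The Laplacian of `⊤` is `n I - J`. -/
def srgDefectMatrix (B μ : ℝ) : Matrix V V ℝ :=
  G.lapMatrix ℝ * G.lapMatrix ℝ - B • G.lapMatrix ℝ + μ • (⊤ : SimpleGraph V).lapMatrix ℝ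

variable {G}

theorem isSymm_srgDefectMatrix (B μ : ℝ) : (G.srgDefectMatrix B μ).IsSymm := by
  have hL := G.isSymm_lapMatrix ℝ
  exact ((pow_two (G.lapMatrix ℝ) ▸ hL.pow 2).sub (hL.smul B)).add
    (((⊤ : SimpleGraph V).isSymm_lapMatrix ℝ).smul μ)

theorem srgDefectMatrix_mulVec_const_eq_zero (B μ : ℝ) :
    G.srgDefectMatrix B μ *ᵥ (fun _ ↦ 1) = 0 := by
  simp only [srgDefectMatrix, add_mulVec, sub_mulVec, smul_mulVec, ← mulVec_mulVec,
    lapMatrix_mulVec_const_eq_zero, mulVec_zero, smul_zero, sub_zero, add_zero]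

theorem srgDefectMatrix_mulVec_of_sum_eq_zero (B μ : ℝ) {ℓ : ℝ} {X : V → ℝ}
    (hsum : ∑ i, X i = 0) (hX : G.lapMatrix ℝ *ᵥ X = ℓ • X) :
    G.srgDefectMatrix B μ *ᵥ X = (ℓ ^ 2 - B * ℓ + μ * Fintype.card V) • X := by
  simp only [srgDefectMatrix, add_mulVec, sub_mulVec, smul_mulVec, ← mulVec_mulVec, hX,
    mulVec_smul, lapMatrix_top_mulVec_of_sum_eq_zero hsum]
  module

theorem srgDefectMatrix_apply_of_ne (B μ : ℝ) {i j : V} (h : i ≠ j) :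
    G.srgDefectMatrix B μ i j = #(G.neighborFinset i ∩ G.neighborFinset j)
      - (G.degree i + G.degree j - B) * G.adjMatrix ℝ i j - μ := by
  simp only [srgDefectMatrix, Matrix.add_apply, Matrix.sub_apply, Matrix.smul_apply,
    lapMatrix_mul_self_apply_of_ne _ _ h, lapMatrix_apply_of_ne _ h, adjMatrix_apply, top_adj,
    if_pos h, smul_eq_mul]
  ring

section CommonNeighbours

variable {lam mu : ℝ}
  (hlam : ∀ i j, G.Adj i j → lam ≤ #(G.neighborFinset i ∩ G.neighborFinset j))
  (hmu : ∀ i j, i ≠ j → ¬G.Adj i j → mu ≤ #(G.neighborFinset i ∩ G.neighborFinset j))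
include hlam hmu

theorem smul_lapMatrix_apply_le_srgDefectMatrix_apply {i j : V} (h : i ≠ j) :
    ((2 * ((G.maxDegree : ℝ) - G.minDegree)) • G.lapMatrix ℝ) i j
      ≤ G.srgDefectMatrix (2 * G.minDegree - lam + mu) mu i j := by
  rw [srgDefectMatrix_apply_of_ne _ _ h, Matrix.smul_apply, lapMatrix_apply_of_ne _ h,
    adjMatrix_apply, smul_eq_mul]
  by_cases hij : G.Adj i j
  · have hi : (G.degree i : ℝ) ≤ G.maxDegree := by exact_mod_cast G.degree_le_maxDegree i
    have hj : (G.degree j : ℝ) ≤ G.maxDegree := by exact_mod_cast G.degree_le_maxDegree j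
    simp only [if_pos hij]
    linarith [hlam i j hij]
  · simp only [if_neg hij]
    linarith [hmu i j h hij]

theorem sq_sub_mul_add_le_of_mulVec_eq_smul {ℓ : ℝ} {X : V → ℝ} (hX0 : X ≠ 0)
    (hsum : ∑ i, X i = 0) (hX : G.lapMatrix ℝ *ᵥ X = ℓ • X) :
    ℓ ^ 2 - (2 * G.minDegree - lam + mu) * ℓ + mu * Fintype.card V
      ≤ 2 * ((G.maxDegree : ℝ) - G.minDegree) * ℓ := by
  set c := 2 * ((G.maxDegree : ℝ) - G.minDegree)
  have hcompare : 0 ≤ X ⬝ᵥ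
      (c • G.lapMatrix ℝ - G.srgDefectMatrix (2 * G.minDegree - lam + mu) mu) *ᵥ X := by
    refine Matrix.IsSymm.dotProduct_mulVec_self_nonneg
      (((G.isSymm_lapMatrix ℝ).smul c).sub (isSymm_srgDefectMatrix _ _)) ?_ (fun i j h ↦ ?_) X
    · rw [sub_mulVec, smul_mulVec, lapMatrix_mulVec_const_eq_zero,
        srgDefectMatrix_mulVec_const_eq_zero, smul_zero, sub_zero]
    · rw [Matrix.sub_apply, sub_nonpos]
      exact smul_lapMatrix_apply_le_srgDefectMatrix_apply hlam hmu h
  rw [sub_mulVec, smul_mulVec, hX, srgDefectMatrix_mulVec_of_sum_eq_zero _ _ hsum hX, smul_smul,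
    ← sub_smul, dotProduct_smul, smul_eq_mul] at hcompare
  have hpos : 0 < X ⬝ᵥ X :=
    (sum_nonneg fun i _ ↦ mul_self_nonneg (X i)).lt_of_ne' (dotProduct_self_eq_zero.not.2 hX0)
  nlinarith

end CommonNeighbours

theorem two_mul_le_degree_add_degree_of_not_adj {ℓ : ℝ}
    (hℓ : ℓ ∈ lowerBounds {l | ∃ X : V → ℝ, X ≠ 0 ∧ ∑ i, X i = 0 ∧ G.lapMatrix ℝ *ᵥ X = l • X})
    {u v : V} (huv : u ≠ v) (hnadj : ¬G.Adj u v) : 2 * ℓ ≤ G.degree u + G.degree v := by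
  set Y : V → ℝ := Pi.single u 1 - Pi.single v 1
  have hY : ∑ i, Y i = 0 := by simp [Y, sum_sub_distrib]
  have hYY : Y ⬝ᵥ Y = 2 := by norm_num [Y, dotProduct_sub, huv, huv.symm]
  have hLY : Y ⬝ᵥ G.lapMatrix ℝ *ᵥ Y = G.degree u + G.degree v := by
    simp [Y, mulVec_sub, dotProduct_sub, lapMatrix, degMatrix, diagonal_apply_ne _ huv,
      diagonal_apply_ne _ huv.symm, G.adj_comm v u, hnadj]
  have := (G.isHermitian_lapMatrix ℝ).mul_dotProduct_self_le_of_sum_eq_zero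
    G.lapMatrix_mulVec_const_eq_zero hℓ hY
  rw [hYY, hLY] at this
  linarith

theorem exists_ne_not_adj_of_minDegree_eq_degree (h : ∃ i j, i ≠ j ∧ ¬G.Adj i j) {v : V}
    (hv : G.minDegree = G.degree v) : ∃ u, v ≠ u ∧ ¬G.Adj v u := by
  obtain ⟨i, j, hij, hnadj⟩ := h
  have hi : 0 < Gᶜ.degree i :=
    (Gᶜ.degree_pos_iff_exists_adj i).2 ⟨j, (compl_adj G i j).2 ⟨hij, hnadj⟩⟩
  have hv' : 0 < Gᶜ.degree v := by
    rw [degree_compl] at hi ⊢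
    have := G.minDegree_le_degree i
    omega
  obtain ⟨u, hu⟩ := (Gᶜ.degree_pos_iff_exists_adj v).1 hv'
  exact ⟨u, (compl_adj G v u).1 hu⟩

end SimpleGraph

theorem sub_sqrt_div_two_le_of_sq_sub_mul_add_nonpos {b c x : ℝ} (h : x ^ 2 - b * x + c ≤ 0) :
    (b - √(b ^ 2 - 4 * c)) / 2 ≤ x := by
  have : b - 2 * x ≤ √(b ^ 2 - 4 * c) := (le_abs_self _).trans (Real.abs_le_sqrt (by nlinarith))
  linarith

theorem algebraic_connectivity_degree_bound_general (n : ℕ)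
    (G : SimpleGraph (Fin n)) [DecidableRel G.Adj]
    (hnoncomplete : ∃ i j : Fin n, i ≠ j ∧ ¬ G.Adj i j)
    (lam mu : ℝ)
    (hlam : ∀ i j : Fin n, G.Adj i j →
      lam ≤ ((G.neighborFinset i ∩ G.neighborFinset j).card : ℝ))
    (hmu : ∀ i j : Fin n, i ≠ j → ¬ G.Adj i j →
      mu ≤ ((G.neighborFinset i ∩ G.neighborFinset j).card : ℝ))
    (ℓ : ℝ)
    (hℓ : IsLeast {l : ℝ | ∃ X : Fin n → ℝ, X ≠ 0 ∧ (∑ i, X i) = 0 ∧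
      (G.lapMatrix ℝ).mulVec X = l • X} ℓ) :
    (2 * (G.minDegree : ℝ) - lam + mu
      - Real.sqrt ((2 * (G.minDegree : ℝ) - lam + mu) ^ 2 - 4 * mu * (n : ℝ)
        - 4 * (G.minDegree : ℝ) ^ 2 + 4 * (G.maxDegree : ℝ) ^ 2)) / 2 ≤ ℓ := by
  obtain ⟨X, hX0, hXsum, hXeig⟩ := hℓ.1
  have hquad := G.sq_sub_mul_add_le_of_mulVec_eq_smul hlam hmu hX0 hXsum hXeig
  rw [Fintype.card_fin] at hquad
  have : Nonempty (Fin n) := ⟨hnoncomplete.choose⟩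
  obtain ⟨v, hv⟩ := G.exists_minimal_degree_vertex
  obtain ⟨u, hvu, hnadj⟩ := G.exists_ne_not_adj_of_minDegree_eq_degree hnoncomplete hv
  have htest := G.two_mul_le_degree_add_degree_of_not_adj hℓ.2 hvu hnadj
  rw [← hv] at htest
  have hu : (G.degree u : ℝ) ≤ G.maxDegree := by exact_mod_cast G.degree_le_maxDegree u
  have hδΔ : (G.minDegree : ℝ) ≤ G.maxDegree := by exact_mod_cast G.minDegree_le_maxDegree
  set δ : ℝ := ↑G.minDegree
  set Δ : ℝ := ↑G.maxDegree
  have hgap : 2 * (Δ - δ) * ℓ ≤ Δ ^ 2 - δ ^ 2 := by nlinarith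
  have hroot := sub_sqrt_div_two_le_of_sq_sub_mul_add_nonpos (b := 2 * δ - lam + mu)
    (c := mu * n + δ ^ 2 - Δ ^ 2) (x := ℓ) (by linarith)
  convert hroot using 4
  ring

/-- **Corollary.** For a simple connected non-complete graph `G` on `n ≥ 2` vertices
with minimum degree `δ`, maximum degree `Δ` and reals `λ ≤ λ(G)`, `μ ≤ μ(G)`:
`ℓ_{n−1}(G) ≥ (2δ − λ + μ − √((2δ − λ + μ)² − 4μn − 4δ² + 4Δ²))/2`. -/
theorem algebraic_connectivity_degree_bound (n : ℕ) (hn : 2 ≤ n)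
    (G : SimpleGraph (Fin n)) [DecidableRel G.Adj]
    (hconn : G.Connected)
    (hnoncomplete : ∃ i j : Fin n, i ≠ j ∧ ¬ G.Adj i j)
    (lam mu : ℝ)
    (hlam : ∀ i j : Fin n, G.Adj i j →
      lam ≤ ((G.neighborFinset i ∩ G.neighborFinset j).card : ℝ))
    (hmu : ∀ i j : Fin n, i ≠ j → ¬ G.Adj i j →
      mu ≤ ((G.neighborFinset i ∩ G.neighborFinset j).card : ℝ))
    (ℓ : ℝ)
    (hℓ : IsLeast {l : ℝ | ∃ X : Fin n → ℝ, X ≠ 0 ∧ (∑ i, X i) = 0 ∧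
      (G.lapMatrix ℝ).mulVec X = l • X} ℓ) :
    (2 * (G.minDegree : ℝ) - lam + mu
      - Real.sqrt ((2 * (G.minDegree : ℝ) - lam + mu) ^ 2 - 4 * mu * (n : ℝ)
        - 4 * (G.minDegree : ℝ) ^ 2 + 4 * (G.maxDegree : ℝ) ^ 2)) / 2 ≤ ℓ :=
  algebraic_connectivity_degree_bound_general n G hnoncomplete lam mu hlam hmu ℓ hℓ
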